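/- arXiv:1907.11981 — 4 statements merged into one kernel-verified Lean document; each statement's English description precedes it below -/
import Mathlib

section
/- Every complex Golay pair (A', B') of length n ≥ 3 is equivalent (via the operations of reversal, conjugate-reversal of A, swap, scaling A by i, and positional scaling by i) to a complex Golay pair (A, B) with a_0 = a_1 = b_0 = 1 and a_2 ∈ {1, -1, i}. -/
/-!
All five operations preserve the entry alphabet `{±1, ±i}` and the Golay property: reversal and
conjugate-reversal conjugate or fix each `N_A(s)`, multiplying `A` by `i` fixes `N_A`, and the
positional scaling multiplies both `N_A(s)` and `N_B(s)` by `(-i)^s`. Every fourth root of unity is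
a power of `i`, so scaling `A` by a power of `i` makes `a_0 = 1`, then a power of the positional
scaling (which fixes index `0`) makes `a_1 = 1`, and scaling `B` (conjugated by swaps) makes
`b_0 = 1`. If now `a_2 = -i`, conjugating `A` entrywise (conjugate-reversal followed by reversal)
turns it into `i` while keeping `a_0 = a_1 = 1`; this reverses `B`, so `b_0` is normalized again.
-/

open Complex Finset

noncomputable def autocorr (n : ℕ) (A : ℕ → ℂ) (s : ℕ) : ℂ :=
  ∑ k ∈ Finset.range (n - s), A k * star (A (k + s))

noncomputable def hallPoly (n : ℕ) (A : ℕ → ℂ) (z : ℂ) : ℂ :=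
  ∑ k ∈ Finset.range n, A k * z ^ k

def isFourth (c : ℂ) : Prop := c = 1 ∨ c = -1 ∨ c = Complex.I ∨ c = -Complex.I

def isCGP (n : ℕ) (A B : ℕ → ℂ) : Prop :=
  (∀ k < n, isFourth (A k)) ∧ (∀ k < n, isFourth (B k)) ∧
  ∀ s, 1 ≤ s → s ≤ n - 1 → autocorr n A s + autocorr n B s = 0

noncomputable def revSeq (n : ℕ) (A : ℕ → ℂ) : ℕ → ℂ := fun k => A (n - 1 - k)

noncomputable def conjRevSeq (n : ℕ) (A : ℕ → ℂ) : ℕ → ℂ := fun k => star (A (n - 1 - k))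

noncomputable def scaleSeq (A : ℕ → ℂ) : ℕ → ℂ := fun k => Complex.I * A k

noncomputable def posScaleSeq (A : ℕ → ℂ) : ℕ → ℂ := fun k => Complex.I ^ k * A k

inductive GolayStep (n : ℕ) : ((ℕ → ℂ) × (ℕ → ℂ)) → ((ℕ → ℂ) × (ℕ → ℂ)) → Prop
  | e1 (A B : ℕ → ℂ) : GolayStep n (A, B) (revSeq n A, revSeq n B)
  | e2 (A B : ℕ → ℂ) : GolayStep n (A, B) (conjRevSeq n A, B)
  | e3 (A B : ℕ → ℂ) : GolayStep n (A, B) (B, A)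
  | e4 (A B : ℕ → ℂ) : GolayStep n (A, B) (scaleSeq A, B)
  | e5 (A B : ℕ → ℂ) : GolayStep n (A, B) (posScaleSeq A, posScaleSeq B)

lemma isFourth_mul {a b : ℂ} (ha : isFourth a) (hb : isFourth b) : isFourth (a * b) := by
  rcases ha with rfl | rfl | rfl | rfl <;> rcases hb with rfl | rfl | rfl | rfl <;>
    norm_num [isFourth]

lemma isFourth_star {a : ℂ} (ha : isFourth a) : isFourth (star a) := by
  rcases ha with rfl | rfl | rfl | rfl <;> norm_num [isFourth]

lemma isFourth_I : isFourth I := Or.inr (Or.inr (Or.inl rfl))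

lemma isFourth_I_pow (m : ℕ) : isFourth (I ^ m) := by
  induction m with
  | zero => exact Or.inl (pow_zero I)
  | succ m ih => exact pow_succ I m ▸ isFourth_mul ih isFourth_I

lemma isFourth.exists_I_pow_mul_eq_one {c : ℂ} (hc : isFourth c) : ∃ m : ℕ, I ^ m * c = 1 := by
  rcases hc with rfl | rfl | rfl | rfl
  · exact ⟨0, by simp⟩
  · exact ⟨2, by simp⟩
  · exact ⟨3, by simp [pow_succ]⟩
  · exact ⟨1, by simp⟩

section Autocorrelation

variable (n : ℕ) (A : ℕ → ℂ) (s : ℕ)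

lemma autocorr_scaleSeq : autocorr n (scaleSeq A) s = autocorr n A s := by
  refine sum_congr rfl fun k _ => ?_
  have hI : I * star I = 1 := by simp
  simp only [scaleSeq, star_mul']
  linear_combination (A k * star (A (k + s))) * hI

lemma autocorr_posScaleSeq : autocorr n (posScaleSeq A) s = (-I) ^ s * autocorr n A s := by
  rw [autocorr, autocorr, mul_sum]
  refine sum_congr rfl fun k _ => ?_
  have hI : I ^ k * (-I) ^ k = 1 := by rw [← mul_pow]; simp
  have hstarI : star I = -I := conj_I
  simp only [posScaleSeq, star_mul', star_pow, hstarI, pow_add]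
  linear_combination ((-I) ^ s * (A k * star (A (k + s)))) * hI

lemma autocorr_revSeq : autocorr n (revSeq n A) s = star (autocorr n A s) := by
  rw [autocorr, autocorr, star_sum, ← sum_range_reflect]
  refine sum_congr rfl fun k hk => ?_
  have hk := mem_range.mp hk
  simp only [revSeq, star_mul', star_star]
  rw [show n - 1 - (n - s - 1 - k) = k + s by omega, show n - 1 - (n - s - 1 - k + s) = k by omega,
    mul_comm]

lemma autocorr_star : autocorr n (fun k => star (A k)) s = star (autocorr n A s) := by
  simp [autocorr, star_sum]

lemma autocorr_conjRevSeq : autocorr n (conjRevSeq n A) s = autocorr n A s := by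
  rw [show conjRevSeq n A = fun k => star (revSeq n A k) from rfl, autocorr_star,
    autocorr_revSeq, star_star]

end Autocorrelation

abbrev GolayReach (n : ℕ) := Relation.ReflTransGen (GolayStep n)

lemma GolayStep.isCGP {n : ℕ} {p q : (ℕ → ℂ) × (ℕ → ℂ)} (hstep : GolayStep n p q)
    (hp : isCGP n p.1 p.2) : isCGP n q.1 q.2 := by
  obtain ⟨hA, hB, hcorr⟩ := hp
  cases hstep with
  | e1 A B =>
    refine ⟨fun k hk => hA _ (by omega), fun k hk => hB _ (by omega), fun s hs hsn => ?_⟩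
    rw [autocorr_revSeq, autocorr_revSeq, ← star_add, hcorr s hs hsn, star_zero]
  | e2 A B =>
    exact ⟨fun k hk => isFourth_star (hA _ (by omega)), hB,
      fun s hs hsn => autocorr_conjRevSeq n A s ▸ hcorr s hs hsn⟩
  | e3 A B => exact ⟨hB, hA, fun s hs hsn => add_comm (autocorr n A s) _ ▸ hcorr s hs hsn⟩
  | e4 A B =>
    exact ⟨fun k hk => isFourth_mul isFourth_I (hA _ hk), hB,
      fun s hs hsn => autocorr_scaleSeq n A s ▸ hcorr s hs hsn⟩
  | e5 A B =>
    refine ⟨fun k hk => isFourth_mul (isFourth_I_pow k) (hA _ hk),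
      fun k hk => isFourth_mul (isFourth_I_pow k) (hB _ hk), fun s hs hsn => ?_⟩
    rw [autocorr_posScaleSeq, autocorr_posScaleSeq, ← mul_add, hcorr s hs hsn, mul_zero]

lemma isCGP.of_golayReach {n : ℕ} {A B A' B' : ℕ → ℂ} (hp : isCGP n A B)
    (h : GolayReach n (A, B) (A', B')) : isCGP n A' B' := by
  suffices ∀ q, GolayReach n (A, B) q → isCGP n q.1 q.2 from this _ h
  intro q hq
  induction hq with
  | refl => exact hp
  | tail _ hstep ih => exact hstep.isCGP ih

namespace GolayReach

variable {n : ℕ} {A B : ℕ → ℂ}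

lemma swap : GolayReach n (A, B) (B, A) := .single (.e3 A B)

lemma mul_I_pow_left (m : ℕ) : GolayReach n (A, B) (fun k => I ^ m * A k, B) := by
  induction m with
  | zero => simp only [pow_zero, one_mul]; rfl
  | succ m ih =>
    convert ih.tail (.e4 _ _) using 2
    funext k
    simp only [scaleSeq, pow_succ]
    ring

lemma mul_I_pow_right (m : ℕ) : GolayReach n (A, B) (A, fun k => I ^ m * B k) :=
  swap.trans (mul_I_pow_left m |>.trans swap)

lemma posScale_pow (m : ℕ) :
    GolayReach n (A, B) (fun k => (I ^ k) ^ m * A k, fun k => (I ^ k) ^ m * B k) := by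
  induction m with
  | zero => simp only [pow_zero, one_mul]; rfl
  | succ m ih =>
    convert ih.tail (.e5 _ _) using 2 <;>
    · funext k
      simp only [posScaleSeq, pow_succ]
      ring

lemma conj_left : GolayReach n (A, B) (revSeq n (conjRevSeq n A), revSeq n B) :=
  (Relation.ReflTransGen.single (.e2 A B)).trans (.single (.e1 _ _))

lemma exists_left_zero_eq_one (hA : isFourth (A 0)) :
    ∃ A₁, GolayReach n (A, B) (A₁, B) ∧ A₁ 0 = 1 := by
  obtain ⟨m, hm⟩ := hA.exists_I_pow_mul_eq_one
  exact ⟨_, mul_I_pow_left m, hm⟩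

lemma exists_right_zero_eq_one (hB : isFourth (B 0)) :
    ∃ B₁, GolayReach n (A, B) (A, B₁) ∧ B₁ 0 = 1 := by
  obtain ⟨m, hm⟩ := hB.exists_I_pow_mul_eq_one
  exact ⟨_, mul_I_pow_right m, hm⟩

lemma exists_left_one_eq_one (hA : isFourth (A 1)) :
    ∃ A₁ B₁, GolayReach n (A, B) (A₁, B₁) ∧ A₁ 0 = A 0 ∧ A₁ 1 = 1 := by
  obtain ⟨m, hm⟩ := hA.exists_I_pow_mul_eq_one
  exact ⟨_, _, posScale_pow m, by simp, by simpa using hm⟩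

end GolayReach

lemma revSeq_conjRevSeq_apply {n k : ℕ} (A : ℕ → ℂ) (hk : k < n) :
    revSeq n (conjRevSeq n A) k = star (A k) := by
  simp only [revSeq, conjRevSeq]
  rw [show n - 1 - (n - 1 - k) = k by omega]

lemma exists_golayReach_normalized {n : ℕ} (hn : 2 ≤ n) {A B : ℕ → ℂ} (h : isCGP n A B) :
    ∃ A₁ B₁, GolayReach n (A, B) (A₁, B₁) ∧ A₁ 0 = 1 ∧ A₁ 1 = 1 ∧ B₁ 0 = 1 := by
  obtain ⟨A₁, hr₁, hA₁0⟩ := GolayReach.exists_left_zero_eq_one (B := B) (h.1 0 (by omega))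
  obtain ⟨A₂, B₂, hr₂, hA₂0, hA₂1⟩ :=
    GolayReach.exists_left_one_eq_one (B := B) ((h.of_golayReach hr₁).1 1 (by omega))
  obtain ⟨B₃, hr₃, hB₃0⟩ :=
    GolayReach.exists_right_zero_eq_one (A := A₂) ((h.of_golayReach (hr₁.trans hr₂)).2.1 0 (by omega))
  exact ⟨A₂, B₃, hr₁.trans (hr₂.trans hr₃), hA₂0.trans hA₁0, hA₂1, hB₃0⟩

theorem stmt6 (n : ℕ) (hn : 3 ≤ n) (A' B' : ℕ → ℂ) (h : isCGP n A' B') :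
    ∃ A B : ℕ → ℂ, Relation.ReflTransGen (GolayStep n) (A', B') (A, B) ∧
      isCGP n A B ∧ A 0 = 1 ∧ A 1 = 1 ∧ B 0 = 1 ∧
      (A 2 = 1 ∨ A 2 = -1 ∨ A 2 = Complex.I) := by
  obtain ⟨A, B, hr, hA0, hA1, hB0⟩ := exists_golayReach_normalized (by omega) h
  have hAB := h.of_golayReach hr
  rcases hAB.1 2 (by omega) with hA2 | hA2 | hA2 | hA2
  · exact ⟨A, B, hr, hAB, hA0, hA1, hB0, .inl hA2⟩
  · exact ⟨A, B, hr, hAB, hA0, hA1, hB0, .inr (.inl hA2)⟩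
  · exact ⟨A, B, hr, hAB, hA0, hA1, hB0, .inr (.inr hA2)⟩
  have hrc := hr.trans (GolayReach.conj_left (A := A) (B := B))
  obtain ⟨B₁, hr₁, hB₁0⟩ := GolayReach.exists_right_zero_eq_one ((h.of_golayReach hrc).2.1 0 (by omega))
  have hrc₁ := hrc.trans hr₁
  refine ⟨_, B₁, hrc₁, h.of_golayReach hrc₁, ?_, ?_, hB₁0, .inr (.inr ?_)⟩ <;>
    simp [revSeq_conjRevSeq_apply A (show 0 < n by omega), revSeq_conjRevSeq_apply A
      (show 1 < n by omega), revSeq_conjRevSeq_apply A (show 2 < n by omega), hA0, hA1, hA2]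
end

section
/- Let A be a complex sequence of length n, A_even the sequence obtained from A by replacing odd-indexed entries with 0, and A_odd the sequence obtained by replacing even-indexed entries with 0. Then for all z on the unit circle, |A_even(z)|^2 + |A_odd(z)|^2 = N_A(0) + 2·Re(∑_{s even, 1 ≤ s ≤ n-1} N_A(s)·z^{-s}). -/
open Complex Finset

noncomputable def evenPoly (n : ℕ) (A : ℕ → ℂ) (z : ℂ) : ℂ :=
  ∑ k ∈ Finset.range n, if Even k then A k * z ^ k else 0

noncomputable def oddPoly (n : ℕ) (A : ℕ → ℂ) (z : ℂ) : ℂ :=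
  ∑ k ∈ Finset.range n, if Odd k then A k * z ^ k else 0
/-!
Since `E(z) + O(z) = A(z)` and `E(z) - O(z) = A(-z)`, the parallelogram law gives
`|E(z)|² + |O(z)|² = (|A(z)|² + |A(-z)|²) / 2`. On the unit circle `conj z = z⁻¹`, so grouping the
terms of `A(z) · conj (A(z))` by their lag `s` gives `|A(z)|² = N_A(0) + 2 Re ∑_{s ≥ 1} N_A(s) z^{-s}`;
averaging this over `±z` cancels the odd lags and leaves the even ones.
-/

namespace Finset

variable {M : Type*} [AddCommMonoid M]

theorem sum_range_sum_range_eq_sum_diag_add_sum_lt (n : ℕ) (f : ℕ → ℕ → M) :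
    ∑ j ∈ range n, ∑ k ∈ range n, f j k =
      ∑ k ∈ range n, f k k + ∑ k ∈ range n, ∑ i ∈ range k, (f i k + f k i) := by
  induction n with
  | zero => simp
  | succ n ih =>
    simp only [sum_range_succ, sum_add_distrib, ih]
    abel

theorem sum_range_sum_range_lt_eq_sum_Icc_sum_range_shift (n : ℕ) (g : ℕ → ℕ → M) :
    ∑ k ∈ range n, ∑ i ∈ range k, g i k =
      ∑ s ∈ Icc 1 (n - 1), ∑ i ∈ range (n - s), g i (i + s) := by
  rw [sum_sigma', sum_sigma']
  refine sum_nbij' (fun x => ⟨x.1 - x.2, x.2⟩) (fun x => ⟨x.2 + x.1, x.2⟩) ?_ ?_ ?_ ?_ ?_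
  · simp only [mem_sigma, mem_range, mem_Icc]; omega
  · simp only [mem_sigma, mem_range, mem_Icc]; omega
  · rintro ⟨k, i⟩ h
    simp only [mem_sigma, mem_range] at h
    dsimp only
    rw [Nat.add_sub_cancel' h.2.le]
  · rintro ⟨s, i⟩ -
    simp
  · rintro ⟨k, i⟩ h
    simp only [mem_sigma, mem_range] at h
    dsimp only
    rw [Nat.add_sub_cancel' h.2.le]

theorem sum_range_mul_star_sum_range {R : Type*} [CommSemiring R] [StarRing R] (n : ℕ)
    (a : ℕ → R) :
    (∑ k ∈ range n, a k) * star (∑ k ∈ range n, a k) =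
      ∑ k ∈ range n, a k * star (a k) +
        ∑ s ∈ Icc 1 (n - 1), ∑ i ∈ range (n - s),
          (a i * star (a (i + s)) + star (a i * star (a (i + s)))) := by
  rw [star_sum, sum_mul_sum, sum_range_sum_range_eq_sum_diag_add_sum_lt,
    sum_range_sum_range_lt_eq_sum_Icc_sum_range_shift]
  simp [mul_comm]

theorem sum_mul_pow_add_sum_mul_neg_pow {R : Type*} [CommRing R] (I : Finset ℕ) (c : ℕ → R)
    (w : R) :
    ∑ s ∈ I, c s * w ^ s + ∑ s ∈ I, c s * (-w) ^ s = 2 * ∑ s ∈ I.filter Even, c s * w ^ s := by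
  rw [← sum_add_distrib, sum_filter, mul_sum]
  refine sum_congr rfl fun s _ => ?_
  rcases Nat.even_or_odd s with hs | hs
  · rw [hs.neg_pow, if_pos hs]; ring
  · rw [hs.neg_pow, if_neg (Nat.not_even_iff_odd.mpr hs)]; ring

end Finset

section

variable (n : ℕ) (A : ℕ → ℂ)

theorem sum_mul_star_eq_autocorr_mul_inv_pow {z : ℂ} (hz : ‖z‖ = 1) (s : ℕ) :
    ∑ i ∈ range (n - s), A i * z ^ i * star (A (i + s) * z ^ (i + s)) =
      autocorr n A s * z⁻¹ ^ s := by
  have hz_inv : z * z⁻¹ = 1 := by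
    rw [Complex.inv_eq_conj hz, Complex.mul_conj', hz]; norm_num
  rw [autocorr, sum_mul]
  refine sum_congr rfl fun i _ => ?_
  rw [star_mul', star_pow, Complex.star_def, ← Complex.inv_eq_conj hz]
  calc A i * z ^ i * (star (A (i + s)) * z⁻¹ ^ (i + s))
      = A i * star (A (i + s)) * (z * z⁻¹) ^ i * z⁻¹ ^ s := by ring
    _ = A i * star (A (i + s)) * z⁻¹ ^ s := by rw [hz_inv, one_pow, mul_one]

theorem ofReal_norm_hallPoly_sq {z : ℂ} (hz : ‖z‖ = 1) :
    ((‖hallPoly n A z‖ ^ 2 : ℝ) : ℂ) =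
      autocorr n A 0 + 2 * (((∑ s ∈ Icc 1 (n - 1), autocorr n A s * z⁻¹ ^ s).re : ℝ) : ℂ) := by
  push_cast
  rw [← Complex.mul_conj', ← Complex.star_def, hallPoly, sum_range_mul_star_sum_range]
  simp only [sum_add_distrib, ← star_sum, sum_mul_star_eq_autocorr_mul_inv_pow n A hz]
  have h_diag := sum_mul_star_eq_autocorr_mul_inv_pow n A hz 0
  simp only [Nat.sub_zero, add_zero, pow_zero, mul_one] at h_diag
  rw [h_diag, Complex.star_def, Complex.add_conj]
  push_cast
  ring

theorem evenPoly_add_oddPoly (z : ℂ) : evenPoly n A z + oddPoly n A z = hallPoly n A z := by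
  rw [evenPoly, oddPoly, hallPoly, ← sum_add_distrib]
  refine sum_congr rfl fun k _ => ?_
  rcases Nat.even_or_odd k with hk | hk
  · simp [hk, Nat.not_odd_iff_even.mpr hk]
  · simp [hk, Nat.not_even_iff_odd.mpr hk]

theorem evenPoly_sub_oddPoly (z : ℂ) : evenPoly n A z - oddPoly n A z = hallPoly n A (-z) := by
  rw [evenPoly, oddPoly, hallPoly, ← sum_sub_distrib]
  refine sum_congr rfl fun k _ => ?_
  rcases Nat.even_or_odd k with hk | hk
  · simp [hk, Nat.not_odd_iff_even.mpr hk, hk.neg_pow]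
  · simp [hk, Nat.not_even_iff_odd.mpr hk, hk.neg_pow]

end

theorem stmt8 (n : ℕ) (A : ℕ → ℂ) (z : ℂ) (hz : ‖z‖ = 1) :
    ((‖evenPoly n A z‖ ^ 2 + ‖oddPoly n A z‖ ^ 2 : ℝ) : ℂ) =
      autocorr n A 0 +
        2 * ((((∑ s ∈ (Finset.Icc 1 (n - 1)).filter Even,
            autocorr n A s * z⁻¹ ^ s).re : ℝ)) : ℂ) := by
  have h_par := parallelogram_law_with_norm ℝ (evenPoly n A z) (oddPoly n A z)
  rw [evenPoly_add_oddPoly, evenPoly_sub_oddPoly] at h_par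
  have h_neg := ofReal_norm_hallPoly_sq n A (z := -z) (by rwa [norm_neg])
  rw [inv_neg] at h_neg
  calc ((‖evenPoly n A z‖ ^ 2 + ‖oddPoly n A z‖ ^ 2 : ℝ) : ℂ)
      = (((‖hallPoly n A z‖ ^ 2 : ℝ) : ℂ) + ((‖hallPoly n A (-z)‖ ^ 2 : ℝ) : ℂ)) / 2 := by
        rw [← Complex.ofReal_add, h_par]; push_cast; ring
    _ = autocorr n A 0 + (((∑ s ∈ Icc 1 (n - 1), autocorr n A s * z⁻¹ ^ s +
          ∑ s ∈ Icc 1 (n - 1), autocorr n A s * (-z⁻¹) ^ s).re : ℝ) : ℂ) := by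
        rw [ofReal_norm_hallPoly_sq n A hz, h_neg, Complex.add_re]; push_cast; ring
    _ = _ := by
        rw [sum_mul_pow_add_sum_mul_neg_pow]; simp
end

section
/- If (A, B) is a complex Golay pair of length n, then a_k·a_{n-k-1}·b_k·b_{n-k-1} = ±1 (i.e., is real) for each k = 0, ..., n-1. -/
/-!
Write `a_k = i^{c_k}`, `b_k = i^{d_k}` and `e_k = c_k + d_k mod 2`. Every term `a_k conj(a_{k+s})`
of an aperiodic autocorrelation is a fourth root of unity, with imaginary part `±1` exactly when
`c_k ≢ c_{k+s} (mod 2)`. Since the imaginary part of `N_A(s) + N_B(s)` vanishes, the number of such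
terms is even, i.e. `∑_{k<n-s} e_k = ∑_{k<n-s} e_{k+s}` in `ZMod 2` for `0 < s < n`. Prefix sums of
`e` then equal suffix sums of the same length, so `e` is a palindrome: `e_k = e_{n-k-1}`, which is
the claim.
-/

open Complex Finset

theorem palindromic_of_sum_range_eq_sum_range_shift {G : Type*} [AddCommGroup G] {n : ℕ}
    {e : ℕ → G}
    (h : ∀ s, 0 < s → s < n → ∑ k ∈ range (n - s), e k = ∑ k ∈ range (n - s), e (k + s))
    {k : ℕ} (hk : k < n) : e k = e (n - k - 1) := by
  set S : ℕ → G := fun j => ∑ i ∈ range j, e i with hS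
  have prefix_add_suffix : ∀ s ≤ n, S s + S (n - s) = S n := by
    intro s hs
    rcases Nat.eq_zero_or_pos s with rfl | hs0
    · simp [hS]
    rcases hs.eq_or_lt with rfl | hsn
    · simp [hS]
    have hsplit : S n = S s + ∑ i ∈ range (n - s), e (i + s) := by
      simp only [hS, ← sum_range_add_sum_Ico _ hs, sum_Ico_eq_sum_range, add_comm s]
    rw [hsplit, ← h s hs0 hsn]
  have h1 := prefix_add_suffix k hk.le
  have h2 := prefix_add_suffix (k + 1) hk
  rw [show n - k = n - k - 1 + 1 by omega] at h1
  rw [show n - (k + 1) = n - k - 1 by omega] at h2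
  simp only [hS, sum_range_succ] at h1 h2
  linear_combination (norm := abel) h2 - h1

/-- For `t = i ^ c`, this is `c mod 2`. -/
noncomputable def imParity (t : ℂ) : ZMod 2 := if t.re = 0 then 1 else 0

namespace isFourth

variable {t u v : ℂ}

theorem mul (hu : isFourth u) (hv : isFourth v) : isFourth (u * v) := by
  rcases hu with rfl | rfl | rfl | rfl <;> rcases hv with rfl | rfl | rfl | rfl <;>
    simp [isFourth]

theorem star (ht : isFourth t) : isFourth (Star.star t) := by
  rcases ht with rfl | rfl | rfl | rfl <;> simp [isFourth]

theorem imParity_mul (hu : isFourth u) (hv : isFourth v) :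
    imParity (u * v) = imParity u + imParity v := by
  rcases hu with rfl | rfl | rfl | rfl <;> rcases hv with rfl | rfl | rfl | rfl <;>
    simp [imParity, CharTwo.add_self_eq_zero]

theorem imParity_star (ht : isFourth t) : imParity (Star.star t) = imParity t := by
  rcases ht with rfl | rfl | rfl | rfl <;> simp [imParity]

theorem intCast_floor_im (ht : isFourth t) : ((⌊t.im⌋ : ℤ) : ℝ) = t.im := by
  rcases ht with rfl | rfl | rfl | rfl <;> simp [Int.floor_neg]

theorem intCast_floor_im_zmod (ht : isFourth t) : ((⌊t.im⌋ : ℤ) : ZMod 2) = imParity t := by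
  rcases ht with rfl | rfl | rfl | rfl <;> simp [imParity, Int.floor_neg, ZMod.neg_eq_self_mod_two]

theorem eq_one_or_eq_neg_one (ht : isFourth t) (h : imParity t = 0) : t = 1 ∨ t = -1 := by
  rcases ht with rfl | rfl | rfl | rfl <;> simp_all [imParity]

end isFourth

section SumOfFourthRoots

variable {ι : Type*} {s : Finset ι} {f : ι → ℂ}

theorem intCast_sum_floor_im (hf : ∀ i ∈ s, isFourth (f i)) :
    ((∑ i ∈ s, ⌊(f i).im⌋ : ℤ) : ℝ) = (∑ i ∈ s, f i).im := by
  push_cast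
  rw [im_sum]
  exact sum_congr rfl fun i hi => (hf i hi).intCast_floor_im

theorem sum_imParity_eq_intCast_sum_floor_im (hf : ∀ i ∈ s, isFourth (f i)) :
    ∑ i ∈ s, imParity (f i) = ((∑ i ∈ s, ⌊(f i).im⌋ : ℤ) : ZMod 2) := by
  push_cast
  exact sum_congr rfl fun i hi => ((hf i hi).intCast_floor_im_zmod).symm

end SumOfFourthRoots

noncomputable def pairParity (A B : ℕ → ℂ) (k : ℕ) : ZMod 2 := imParity (A k) + imParity (B k)

theorem isCGP.sum_pairParity_eq_sum_shift {n : ℕ} {A B : ℕ → ℂ} (h : isCGP n A B) {s : ℕ}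
    (hs0 : 0 < s) (hsn : s < n) :
    ∑ k ∈ range (n - s), pairParity A B k = ∑ k ∈ range (n - s), pairParity A B (k + s) := by
  obtain ⟨hA, hB, hzero⟩ := h
  have hmem : ∀ k ∈ range (n - s), k < n ∧ k + s < n := fun k hk => by
    rw [mem_range] at hk; omega
  have hA' : ∀ k ∈ range (n - s), isFourth (A k * star (A (k + s))) := fun k hk =>
    (hA k (hmem k hk).1).mul (hA _ (hmem k hk).2).star
  have hB' : ∀ k ∈ range (n - s), isFourth (B k * star (B (k + s))) := fun k hk =>
    (hB k (hmem k hk).1).mul (hB _ (hmem k hk).2).star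
  have him_int : ∑ k ∈ range (n - s), ⌊(A k * star (A (k + s))).im⌋ +
      ∑ k ∈ range (n - s), ⌊(B k * star (B (k + s))).im⌋ = 0 := by
    have him := congrArg im (hzero s hs0 (by omega))
    rw [add_im, autocorr, autocorr, ← intCast_sum_floor_im hA', ← intCast_sum_floor_im hB'] at him
    exact_mod_cast him
  rw [← CharTwo.add_eq_zero, ← sum_add_distrib]
  calc ∑ k ∈ range (n - s), (pairParity A B k + pairParity A B (k + s))
      = ∑ k ∈ range (n - s), imParity (A k * star (A (k + s))) +
          ∑ k ∈ range (n - s), imParity (B k * star (B (k + s))) := by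
        rw [← sum_add_distrib]
        refine sum_congr rfl fun k hk => ?_
        obtain ⟨hk, hks⟩ := hmem k hk
        rw [(hA k hk).imParity_mul (hA _ hks).star, (hB k hk).imParity_mul (hB _ hks).star,
          (hA _ hks).imParity_star, (hB _ hks).imParity_star, pairParity, pairParity]
        ring
    _ = 0 := by
        rw [sum_imParity_eq_intCast_sum_floor_im hA', sum_imParity_eq_intCast_sum_floor_im hB',
          ← Int.cast_add, him_int, Int.cast_zero]

theorem stmt13 (n : ℕ) (A B : ℕ → ℂ) (h : isCGP n A B) :
    ∀ k < n, A k * A (n - k - 1) * B k * B (n - k - 1) = 1 ∨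
             A k * A (n - k - 1) * B k * B (n - k - 1) = -1 := by
  intro k hk
  have hsymm : pairParity A B k = pairParity A B (n - k - 1) :=
    palindromic_of_sum_range_eq_sum_range_shift (fun _ => h.sum_pairParity_eq_sum_shift) hk
  obtain ⟨hA, hB, -⟩ := h
  have hk' : n - k - 1 < n := by omega
  have hAA := (hA k hk).mul (hA _ hk')
  have hAAB := hAA.mul (hB k hk)
  refine (hAAB.mul (hB _ hk')).eq_one_or_eq_neg_one ?_
  rw [hAAB.imParity_mul (hB _ hk'), hAA.imParity_mul (hB k hk), (hA k hk).imParity_mul (hA _ hk')]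
  rw [← CharTwo.add_eq_zero, pairParity, pairParity] at hsymm
  linear_combination hsymm
end

section
/- Let A ∈ {±1, ±i}^7 be any sequence of the form [1, x, 1, y, 1, z, 1] (with x, y, z ∈ {±1, ±i} arbitrary). Then A is not a member of any complex Golay pair. -/
open Complex Finset

/-! For a complex Golay pair `(A, B)` of length `n`, the aperiodic autocorrelations cancel, so
`|A(z)|² + |B(z)|² = 2n` on the unit circle. Evaluating at `z = 1` and `z = -1` and adding gives
`|A(1)|² + |A(-1)|² ≤ 4n = 28`. For `A = [1, x, 1, y, 1, z, 1]` we have `A(±1) = 4 ± (x + y + z)`,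
and the parallelogram law gives `|A(1)|² + |A(-1)|² = 32 + 2|x + y + z|² > 28`. -/

open ComplexConjugate

theorem sum_range_sum_range_eq_diag_add_offDiag {M : Type*} [AddCommMonoid M]
    (f : ℕ → ℕ → M) (n : ℕ) :
    ∑ j ∈ range n, ∑ k ∈ range n, f j k =
      ∑ k ∈ range n, f k k + ∑ s ∈ Ico 1 n, ∑ k ∈ range (n - s), (f k (k + s) + f (k + s) k) := by
  induction n with
  | zero => simp
  | succ n ih =>
    set g : ℕ → ℕ → M := fun s k => f k (k + s) + f (k + s) k
    change _ = _ + ∑ s ∈ Ico 1 n, ∑ k ∈ range (n - s), g s k at ih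
    have hlast : ∑ s ∈ Ico 1 (n + 1), g s (n - s) = ∑ k ∈ range n, (f k n + f n k) := by
      rw [sum_Ico_eq_sum_range, ← sum_range_reflect]
      refine sum_congr rfl fun k hk => ?_
      have hkn := mem_range.1 hk
      rw [show n - (1 + (n + 1 - 1 - 1 - k)) = k by omega]
      dsimp only [g]
      rw [show k + (1 + (n + 1 - 1 - 1 - k)) = n by omega]
    have hshort : ∑ s ∈ Ico 1 (n + 1), ∑ k ∈ range (n - s), g s k =
        ∑ s ∈ Ico 1 n, ∑ k ∈ range (n - s), g s k := by
      refine (sum_subset (Ico_subset_Ico_right n.le_succ) fun s hs hs' => ?_).symm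
      rw [show n - s = 0 by simp at hs hs'; omega, sum_range_zero]
    have hsplit : ∑ s ∈ Ico 1 (n + 1), ∑ k ∈ range (n + 1 - s), g s k =
        ∑ s ∈ Ico 1 n, ∑ k ∈ range (n - s), g s k + ∑ s ∈ Ico 1 (n + 1), g s (n - s) := by
      rw [← hshort, ← sum_add_distrib]
      refine sum_congr rfl fun s hs => ?_
      obtain ⟨hs1, hs2⟩ := mem_Ico.1 hs
      rw [show n + 1 - s = n - s + 1 by omega, sum_range_succ]
    rw [hsplit, hlast]
    simp only [sum_range_succ, sum_add_distrib, ih]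
    abel

theorem isFourth.mul_conj_eq_one {c : ℂ} (h : isFourth c) : c * conj c = 1 := by
  rcases h with rfl | rfl | rfl | rfl <;> simp

theorem hallPoly_mul_conj (n : ℕ) (A : ℕ → ℂ) {z : ℂ} (hz : ‖z‖ = 1) :
    hallPoly n A z * conj (hallPoly n A z) =
      ∑ k ∈ range n, A k * conj (A k) +
        ∑ s ∈ Ico 1 n, (autocorr n A s * conj z ^ s + conj (autocorr n A s) * z ^ s) := by
  have hzk (k : ℕ) : z ^ k * conj z ^ k = 1 := by
    rw [← mul_pow, mul_conj', hz, ofReal_one, one_pow, one_pow]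
  rw [hallPoly, map_sum, sum_mul_sum, sum_range_sum_range_eq_diag_add_offDiag]
  congr 1
  · refine sum_congr rfl fun k _ => ?_
    simp only [map_mul, map_pow]
    linear_combination A k * conj (A k) * hzk k
  · refine sum_congr rfl fun s _ => ?_
    rw [autocorr, sum_mul, map_sum, sum_mul, ← sum_add_distrib]
    refine sum_congr rfl fun k _ => ?_
    simp only [map_mul, map_pow, star_def, conj_conj, pow_add]
    linear_combination
      (A k * conj (A (k + s)) * conj z ^ s + A (k + s) * conj (A k) * z ^ s) * hzk k

theorem isCGP.normSq_hallPoly_add_normSq {n : ℕ} {A B : ℕ → ℂ} (h : isCGP n A B) {z : ℂ}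
    (hz : ‖z‖ = 1) : normSq (hallPoly n A z) + normSq (hallPoly n B z) = 2 * n := by
  obtain ⟨hA, hB, hAB⟩ := h
  have hdiag (C : ℕ → ℂ) (hC : ∀ k < n, isFourth (C k)) : ∑ k ∈ range n, C k * conj (C k) = n := by
    rw [sum_congr rfl fun k hk => (hC k (mem_range.1 hk)).mul_conj_eq_one]
    simp
  have hoff : ∑ s ∈ Ico 1 n, (autocorr n A s * conj z ^ s + conj (autocorr n A s) * z ^ s) +
      ∑ s ∈ Ico 1 n, (autocorr n B s * conj z ^ s + conj (autocorr n B s) * z ^ s) = 0 := by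
    rw [← sum_add_distrib]
    refine sum_eq_zero fun s hs => ?_
    obtain ⟨hs1, hsn⟩ := mem_Ico.1 hs
    have hs := hAB s hs1 (by omega)
    have hs' := congrArg conj hs
    rw [map_add, map_zero] at hs'
    linear_combination conj z ^ s * hs + z ^ s * hs'
  have : (normSq (hallPoly n A z) + normSq (hallPoly n B z) : ℂ) = 2 * n := by
    rw [← mul_conj, ← mul_conj, hallPoly_mul_conj n A hz, hallPoly_mul_conj n B hz]
    linear_combination hdiag A hA + hdiag B hB + hoff
  exact_mod_cast this

theorem not_exists_isCGP_of_lt {n : ℕ} {A : ℕ → ℂ}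
    (h : 4 * n < normSq (hallPoly n A 1) + normSq (hallPoly n A (-1))) : ¬ ∃ B, isCGP n A B := by
  rintro ⟨B, hAB⟩
  have h_one := hAB.normSq_hallPoly_add_normSq (z := 1) (by simp)
  have h_neg := hAB.normSq_hallPoly_add_normSq (z := -1) (by simp)
  linarith [normSq_nonneg (hallPoly n B 1), normSq_nonneg (hallPoly n B (-1))]

theorem stmt18_general (x y z : ℂ) :
    ¬ ∃ B : ℕ → ℂ,
      isCGP 7 (fun k => if k = 1 then x else if k = 3 then y else if k = 5 then z else 1) B := by
  refine not_exists_isCGP_of_lt ?_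
  have parallelogram (w : ℂ) : 4 * 7 < normSq (4 + w) + normSq (4 - w) := by
    rw [normSq_add, normSq_sub]
    norm_num
    linarith [normSq_nonneg w]
  convert parallelogram (x + y + z) using 3 <;> simp [hallPoly, sum_range_succ] <;> ring

theorem stmt18 (x y z : ℂ) (hx : isFourth x) (hy : isFourth y) (hz : isFourth z) :
    ¬ ∃ B : ℕ → ℂ,
      isCGP 7 (fun k => if k = 1 then x else if k = 3 then y else if k = 5 then z else 1) B :=
  stmt18_general x y z
end
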